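/- arXiv:1009.0447 — 7 statements merged into one kernel-verified Lean document; each statement's English description precedes it below -/
import Mathlib

section
/- Let O be an order in a number field K with conductor f. The maps a ↦ a ∩ O and c ↦ c·O_K are mutually inverse multiplicative bijections between the set of ideals of O_K relatively prime to f and the set of ideals of O relatively prime to f. -/
/-!
Coprimality to `f` gives `1 = x + y` with `x` in the ideal and `y ∈ f ⊆ O`, hence also `x ∈ O`.
Writing `z = x z + y z` then shows `(a ∩ O) · 𝓞 K = a` and, because `c · 𝓞 K · f ⊆ c`, also
`c · 𝓞 K ∩ O = c`. Multiplicativity follows since extension is multiplicative and products of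
ideals coprime to `f ∩ O` stay coprime to it.
-/

open NumberField

namespace Ideal

theorem map_sup_eq_top_of_sup_comap_eq_top {R S : Type*} [CommRing R] [CommRing S]
    (φ : R →+* S) {c : Ideal R} {f : Ideal S} (hc : c ⊔ f.comap φ = ⊤) : c.map φ ⊔ f = ⊤ :=
  eq_top_iff.2 <| calc
    ⊤ = (c ⊔ f.comap φ).map φ := by rw [hc, map_top]
    _ = c.map φ ⊔ (f.comap φ).map φ := map_sup φ c _
    _ ≤ c.map φ ⊔ f := sup_le_sup_left map_comap_le _

section Subring

variable {R : Type*} [CommRing R] {O : Subring R} {f : Ideal R}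

theorem comap_subtype_sup_comap_eq_top (hfO : (f : Set R) ⊆ O) {a : Ideal R}
    (ha : a ⊔ f = ⊤) : a.comap O.subtype ⊔ f.comap O.subtype = ⊤ := by
  obtain ⟨x, hx, y, hy, hxy⟩ :=
    Submodule.mem_sup.mp (ha ▸ Submodule.mem_top : (1 : R) ∈ a ⊔ f)
  have hxO : x ∈ O := by
    rw [eq_sub_of_add_eq hxy]
    exact O.sub_mem O.one_mem (hfO hy)
  rw [eq_top_iff_one]
  exact Submodule.mem_sup.mpr ⟨⟨x, hxO⟩, hx, ⟨y, hfO hy⟩, hy, Subtype.ext hxy⟩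

theorem map_comap_subtype_eq_of_sup_eq_top (hfO : (f : Set R) ⊆ O) {a : Ideal R}
    (ha : a ⊔ f = ⊤) : (a.comap O.subtype).map O.subtype = a := by
  refine le_antisymm map_comap_le fun z hz ↦ ?_
  obtain ⟨u, hu, v, hv, huv⟩ := Submodule.mem_sup.mp
    ((comap_subtype_sup_comap_eq_top hfO ha).symm ▸ Submodule.mem_top :
      (1 : O) ∈ a.comap O.subtype ⊔ f.comap O.subtype)
  have hvz : (v : R) * z ∈ O := hfO (f.mul_mem_right z hv)
  have hvz' : (⟨v * z, hvz⟩ : O) ∈ a.comap O.subtype := a.mul_mem_left _ hz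
  rw [← one_mul z, ← Subring.coe_one, ← huv, Subring.coe_add, add_mul]
  exact add_mem (mul_mem_right _ _ (mem_map_of_mem _ hu)) (mem_map_of_mem _ hvz')

theorem mul_mem_image_of_mem_map_subtype (hfO : (f : Set R) ⊆ O) {c : Ideal O} {w : R}
    (hw : w ∈ c.map O.subtype) : ∀ v ∈ f, w * v ∈ O.subtype '' c := by
  induction hw using Submodule.span_induction with
  | mem x hx =>
    rintro v hv
    obtain ⟨y, hy, rfl⟩ := hx
    exact ⟨y * ⟨v, hfO hv⟩, c.mul_mem_right _ hy, rfl⟩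
  | zero => exact fun v _ ↦ ⟨0, c.zero_mem, by simp⟩
  | add x y _ _ hx hy =>
    intro v hv
    obtain ⟨x', hx', hxx'⟩ := hx v hv
    obtain ⟨y', hy', hyy'⟩ := hy v hv
    exact ⟨x' + y', c.add_mem hx' hy', by rw [map_add, hxx', hyy', add_mul]⟩
  | smul r x _ hx =>
    intro v hv
    obtain ⟨z, hz, hzx⟩ := hx (r * v) (f.mul_mem_left r hv)
    exact ⟨z, hz, by rw [hzx, smul_eq_mul]; ring⟩

theorem comap_map_subtype_eq_of_sup_eq_top (hfO : (f : Set R) ⊆ O) {c : Ideal O}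
    (hc : c ⊔ f.comap O.subtype = ⊤) : (c.map O.subtype).comap O.subtype = c := by
  refine le_antisymm (fun w hw ↦ ?_) le_comap_map
  obtain ⟨u, hu, v, hv, huv⟩ := Submodule.mem_sup.mp (hc ▸ Submodule.mem_top :
    (1 : O) ∈ c ⊔ f.comap O.subtype)
  obtain ⟨z, hz, hzw⟩ := mul_mem_image_of_mem_map_subtype hfO hw v hv
  rw [← mul_one w, ← huv, mul_add]
  exact c.add_mem (c.mul_mem_left w hu) ((Subtype.ext hzw : z = w * v) ▸ hz)

theorem comap_subtype_mul_of_sup_eq_top (hfO : (f : Set R) ⊆ O) {a b : Ideal R}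
    (ha : a ⊔ f = ⊤) (hb : b ⊔ f = ⊤) :
    (a * b).comap O.subtype = a.comap O.subtype * b.comap O.subtype := by
  have hab : a.comap O.subtype * b.comap O.subtype ⊔ f.comap O.subtype = ⊤ :=
    (mul_sup_eq_of_coprime_left (comap_subtype_sup_comap_eq_top hfO ha)).trans
      (comap_subtype_sup_comap_eq_top hfO hb)
  rw [← comap_map_subtype_eq_of_sup_eq_top hfO hab, Ideal.map_mul,
    map_comap_subtype_eq_of_sup_eq_top hfO ha, map_comap_subtype_eq_of_sup_eq_top hfO hb]

end Subring

end Ideal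

theorem contraction_extension_bijection_general {K : Type*} [Field K]
    (O : Subring (𝓞 K))
    (f : Ideal (𝓞 K)) (hf : ∀ a : 𝓞 K, a ∈ f ↔ ∀ x : 𝓞 K, a * x ∈ O) :
    (∀ a : Ideal (𝓞 K), a ⊔ f = ⊤ →
        a.comap O.subtype ⊔ f.comap O.subtype = ⊤ ∧ (a.comap O.subtype).map O.subtype = a) ∧
    (∀ c : Ideal O, c ⊔ f.comap O.subtype = ⊤ →
        c.map O.subtype ⊔ f = ⊤ ∧ (c.map O.subtype).comap O.subtype = c) ∧
    (∀ a b : Ideal (𝓞 K), a ⊔ f = ⊤ → b ⊔ f = ⊤ →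
        (a * b).comap O.subtype = a.comap O.subtype * b.comap O.subtype) := by
  have hfO : (f : Set (𝓞 K)) ⊆ O := fun y hy ↦ by simpa using (hf y).mp hy 1
  exact ⟨fun a ha ↦ ⟨Ideal.comap_subtype_sup_comap_eq_top hfO ha,
      Ideal.map_comap_subtype_eq_of_sup_eq_top hfO ha⟩,
    fun c hc ↦ ⟨Ideal.map_sup_eq_top_of_sup_comap_eq_top O.subtype hc,
      Ideal.comap_map_subtype_eq_of_sup_eq_top hfO hc⟩,
    fun _ _ ↦ Ideal.comap_subtype_mul_of_sup_eq_top hfO⟩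

/-- The maps `a ↦ a ∩ O` and `c ↦ c · 𝓞 K` are mutually inverse multiplicative bijections
between the ideals of `𝓞 K` relatively prime to the conductor `f` and the ideals of `O`
relatively prime to `f`. -/
theorem contraction_extension_bijection {K : Type*} [Field K] [NumberField K]
    (O : Subring (𝓞 K)) (hO : O.toAddSubgroup.index ≠ 0)
    (f : Ideal (𝓞 K)) (hf : ∀ a : 𝓞 K, a ∈ f ↔ ∀ x : 𝓞 K, a * x ∈ O) :
    (∀ a : Ideal (𝓞 K), a ⊔ f = ⊤ →
        a.comap O.subtype ⊔ f.comap O.subtype = ⊤ ∧ (a.comap O.subtype).map O.subtype = a) ∧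
    (∀ c : Ideal O, c ⊔ f.comap O.subtype = ⊤ →
        c.map O.subtype ⊔ f = ⊤ ∧ (c.map O.subtype).comap O.subtype = c) ∧
    (∀ a b : Ideal (𝓞 K), a ⊔ f = ⊤ → b ⊔ f = ⊤ →
        (a * b).comap O.subtype = a.comap O.subtype * b.comap O.subtype) :=
  contraction_extension_bijection_general O f hf
end

section
/- Let O be an order in a number field K with conductor f, and let a, b be ideals of O_K such that a + f = O_K and b divides f. Then (a ∩ O) + (b ∩ O) = O. -/
open NumberField

theorem Ideal.comap_subtype_sup_eq_top_of_coe_subset {R : Type*} [CommRing R] (O : Subring R)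
    {a c : Ideal R} (hc : (c : Set R) ⊆ O) (h : a ⊔ c = ⊤) :
    a.comap O.subtype ⊔ c.comap O.subtype = ⊤ := by
  obtain ⟨x, hx, y, hy, hxy⟩ := Submodule.mem_sup.mp ((Ideal.eq_top_iff_one _).mp h)
  have hyO : y ∈ O := hc hy
  have hxO : x ∈ O := by
    rw [eq_sub_of_add_eq hxy]
    exact O.sub_mem O.one_mem hyO
  rw [Ideal.eq_top_iff_one, Submodule.mem_sup]
  exact ⟨⟨x, hxO⟩, hx, ⟨y, hyO⟩, hy, Subtype.ext hxy⟩

theorem contraction_coprime_of_coprime_conductor_dvd_general {K : Type*} [Field K]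
    (O : Subring (𝓞 K))
    (f : Ideal (𝓞 K)) (hf : ∀ a : 𝓞 K, a ∈ f ↔ ∀ x : 𝓞 K, a * x ∈ O)
    (a b : Ideal (𝓞 K)) (ha : a ⊔ f = ⊤) (hb : f ≤ b) :
    a.comap O.subtype ⊔ b.comap O.subtype = ⊤ := by
  have hfO : (f : Set (𝓞 K)) ⊆ O := fun y hy => by simpa using (hf y).mp hy 1
  refine top_le_iff.mp ?_
  calc ⊤ = a.comap O.subtype ⊔ f.comap O.subtype :=
        (Ideal.comap_subtype_sup_eq_top_of_coe_subset O hfO ha).symm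
    _ ≤ a.comap O.subtype ⊔ b.comap O.subtype := sup_le_sup_left (Ideal.comap_mono hb) _

/-- If `a + f = 𝓞 K` and `b` divides the conductor `f`, then `(a ∩ O) + (b ∩ O) = O`. -/
theorem contraction_coprime_of_coprime_conductor_dvd {K : Type*} [Field K] [NumberField K]
    (O : Subring (𝓞 K)) (hO : O.toAddSubgroup.index ≠ 0)
    (f : Ideal (𝓞 K)) (hf : ∀ a : 𝓞 K, a ∈ f ↔ ∀ x : 𝓞 K, a * x ∈ O)
    (a b : Ideal (𝓞 K)) (ha : a ⊔ f = ⊤) (hb : f ≤ b) :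
    a.comap O.subtype ⊔ b.comap O.subtype = ⊤ :=
  contraction_coprime_of_coprime_conductor_dvd_general O f hf a b ha hb
end

section
/- Let O be an order in a number field K with ring of integers O_K, and let p_1, ..., p_k be distinct nonzero prime ideals of O. For each i, let p_i·O_K = P_{i,1}^{e_{i,1}} ··· P_{i,l_i}^{e_{i,l_i}} be the factorization into distinct prime ideals P_{i,j} of O_K with exponents e_{i,j} ≥ 1. Then [O_K : O] ≥ ∏_{i=1}^k (1/[O : p_i]) ∏_{j=1}^{l_i} N(P_{i,j})^{e_{i,j}}. -/
/-!
Write `I = ∏ i, p i`. Distinct nonzero primes of `O` are maximal, since `O` is a domain that is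
finite over `ℤ`, hence pairwise comaximal, so by the Chinese remainder theorem
`[O : I] = ∏ i, [O : p i]`. On the other side `I 𝓞_K = ∏ i, ∏ j, P i j ^ e i j` has norm
`[𝓞_K : I 𝓞_K]`, which divides `[𝓞_K : I] = [O : I] [𝓞_K : O]` because `I ⊆ I 𝓞_K`.
-/

open NumberField Function

theorem Subring.module_finite_int {S : Type*} [CommRing S] [Module.Finite ℤ S] (O : Subring S) :
    Module.Finite ℤ O :=
  inferInstanceAs (Module.Finite ℤ O.toAddSubgroup.toIntSubmodule)

theorem Subring.index_map_subtype_dvd {S : Type*} [CommRing S] (O : Subring S) (I : Ideal O) :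
    (I.map O.subtype).toAddSubgroup.index ∣ Nat.card (O ⧸ I) * O.toAddSubgroup.index := by
  change _ ∣ I.toAddSubgroup.index * _
  rw [← AddSubgroup.index_map_subtype (H := O.toAddSubgroup) I.toAddSubgroup]
  refine AddSubgroup.index_dvd_of_le ?_
  rintro _ ⟨x, hx, rfl⟩
  exact Ideal.mem_map_of_mem _ hx

namespace Ideal

variable {R : Type*} [CommRing R] {ι : Type*}

theorem pairwise_isCoprime_of_isPrime [Ring.DimensionLEOne R] {p : ι → Ideal R}
    (hprime : ∀ i, (p i).IsPrime) (hne : ∀ i, p i ≠ ⊥) (hinj : Injective p) :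
    Pairwise (IsCoprime on p) := fun i j hij =>
  isCoprime_iff_sup_eq.mpr <| ((hprime i).isMaximal (hne i)).coprime_of_ne
    ((hprime j).isMaximal (hne j)) (hinj.ne hij)

theorem card_quotient_prod_of_pairwise_isCoprime [Fintype ι] {I : ι → Ideal R}
    (h : Pairwise (IsCoprime on I)) :
    Nat.card (R ⧸ ∏ i, I i) = ∏ i, Nat.card (R ⧸ I i) := by
  rw [prod_eq_iInf_of_pairwise_isCoprime fun i _ j _ hij => h hij, ← Nat.card_pi]
  simp only [Finset.mem_univ, iInf_pos]
  exact Nat.card_congr (quotientInfRingEquivPiQuotient I h).toEquiv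

end Ideal

theorem index_lower_bound_general {K : Type*} [Field K] [NumberField K]
    (O : Subring (𝓞 K)) (hO : O.toAddSubgroup.index ≠ 0)
    {k : ℕ} (p : Fin k → Ideal O) (hpprime : ∀ i, (p i).IsPrime) (hpne : ∀ i, p i ≠ ⊥)
    (hpdist : Function.Injective p)
    (l : Fin k → ℕ)
    (P : (i : Fin k) → Fin (l i) → Ideal (𝓞 K))
    (e : (i : Fin k) → Fin (l i) → ℕ)
    (hfact : ∀ i, (p i).map O.subtype = ∏ j, P i j ^ e i j) :
    ∏ i, ∏ j, Ideal.absNorm (P i j) ^ e i j ≤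
      O.toAddSubgroup.index * ∏ i, Nat.card (O ⧸ p i) := by
  have := O.module_finite_int
  have hcard := Ideal.card_quotient_prod_of_pairwise_isCoprime
    (Ideal.pairwise_isCoprime_of_isPrime hpprime hpne hpdist)
  have hpos : 0 < Nat.card (O ⧸ ∏ i, p i) * O.toAddSubgroup.index := by
    have := fun i => Ring.HasFiniteQuotients.finiteQuotient (hpne i)
    rw [hcard]
    exact Nat.mul_pos (Finset.prod_pos fun i _ => Nat.card_pos) (Nat.pos_of_ne_zero hO)
  calc ∏ i, ∏ j, Ideal.absNorm (P i j) ^ e i j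
      = Ideal.absNorm ((∏ i, p i).map O.subtype) := by
        rw [← Ideal.mapHom_apply, map_prod]
        simp only [Ideal.mapHom_apply, hfact, map_prod, map_pow]
    _ ≤ Nat.card (O ⧸ ∏ i, p i) * O.toAddSubgroup.index :=
        Nat.le_of_dvd hpos (O.index_map_subtype_dvd _)
    _ = O.toAddSubgroup.index * ∏ i, Nat.card (O ⧸ p i) := by rw [hcard, mul_comm]

/-- Index bound: if `p 1, ..., p k` are distinct nonzero primes of an order `O` of `K`, with
factorisations `p i · 𝓞 K = ∏ j, (P i j) ^ (e i j)` into distinct primes of `𝓞 K`, then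
`[𝓞 K : O] ≥ ∏ i (1/[O : p i]) ∏ j N(P i j) ^ (e i j)`, stated multiplicatively. -/
theorem index_lower_bound {K : Type*} [Field K] [NumberField K]
    (O : Subring (𝓞 K)) (hO : O.toAddSubgroup.index ≠ 0)
    {k : ℕ} (p : Fin k → Ideal O) (hpprime : ∀ i, (p i).IsPrime) (hpne : ∀ i, p i ≠ ⊥)
    (hpdist : Function.Injective p)
    (l : Fin k → ℕ) (hl : ∀ i, 1 ≤ l i)
    (P : (i : Fin k) → Fin (l i) → Ideal (𝓞 K)) (hPprime : ∀ i j, (P i j).IsPrime)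
    (hPdist : ∀ i, Function.Injective (P i))
    (e : (i : Fin k) → Fin (l i) → ℕ) (he : ∀ i j, 1 ≤ e i j)
    (hfact : ∀ i, (p i).map O.subtype = ∏ j, P i j ^ e i j) :
    ∏ i, ∏ j, Ideal.absNorm (P i j) ^ e i j ≤
      O.toAddSubgroup.index * ∏ i, Nat.card (O ⧸ p i) :=
  index_lower_bound_general O hO p hpprime hpne hpdist l P e hfact
end

section
/- With the notation of the previous index bound, equality [O_K : O] = ∏_{i=1}^k (1/[O : p_i]) ∏_{j=1}^{l_i} N(P_{i,j})^{e_{i,j}} holds if and only if the conductor f of O divides ∏_{i=1}^k ∏_{j=1}^{l_i} P_{i,j}^{e_{i,j}}. -/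
/-!
Put `𝔓 = ∏ P_{i,j} ^ e_{i,j} = (∏ p_i) 𝓞 K`. As `𝓞 K` is integral over `O` and the `p_i` are
distinct maximal ideals, `𝔓 ∩ O = ∏ p_i = ⨅ p_i`, so by the Chinese remainder theorem
`∏ [O : p_i] = [O : 𝔓 ∩ O]`. Comparing both sides with `O + 𝔓` gives
`[𝓞 K : O] * [O : 𝔓 ∩ O] = [𝓞 K : 𝔓] * [O + 𝔓 : O]`, so equality holds iff `𝔓 ⊆ O`,
which for an ideal of `𝓞 K` means `𝔓 ⊆ f`.
-/

open NumberField Function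

namespace AddSubgroup

variable {G : Type*} [AddGroup G]

theorem index_mul_relIndex_eq_relIndex_sup_mul_index (H K : AddSubgroup G) [K.Normal] :
    H.index * K.relIndex H = H.relIndex (H ⊔ K) * K.index := by
  rw [← H.relIndex_mul_index le_sup_left, ← K.relIndex_mul_index (le_sup_right (a := H)),
    relIndex_sup_right H K]
  ring

theorem index_mul_relIndex_eq_index_iff_le {H K : AddSubgroup G} [K.Normal] (hK : K.index ≠ 0) :
    H.index * K.relIndex H = K.index ↔ K ≤ H := by
  refine ⟨fun h => ?_, fun h => by rw [mul_comm, K.relIndex_mul_index h]⟩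
  rw [index_mul_relIndex_eq_relIndex_sup_mul_index, Nat.mul_eq_right hK, relIndex_eq_one] at h
  exact le_sup_right.trans h

end AddSubgroup

namespace Ideal

variable {R : Type*} [CommRing R]

theorem le_conductor_iff {O : Subring R} {f : Ideal R} (hf : ∀ a, a ∈ f ↔ ∀ x, a * x ∈ O)
    (I : Ideal R) : I ≤ f ↔ I.toAddSubgroup ≤ O.toAddSubgroup :=
  ⟨fun h a ha => by simpa using (hf a).1 (h ha) 1,
    fun h a ha => (hf a).2 fun x => h (I.mul_mem_right x ha)⟩

theorem pairwise_isCoprime_of_isMaximal {ι : Type*} {p : ι → Ideal R}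
    (hmax : ∀ i, (p i).IsMaximal) (hp : Injective p) : Pairwise (IsCoprime on p) :=
  fun i j hij => isCoprime_iff_sup_eq.mpr ((hmax i).coprime_of_ne (hmax j) (hp.ne hij))

theorem natCard_quotient_iInf {ι : Type*} [Fintype ι] {p : ι → Ideal R}
    (hp : Pairwise (IsCoprime on p)) :
    Nat.card (R ⧸ ⨅ i, p i) = ∏ i, Nat.card (R ⧸ p i) := by
  rw [Nat.card_congr (quotientInfRingEquivPiQuotient p hp).toEquiv, Nat.card_pi]

theorem comap_map_iInf_of_isMaximal {S ι : Type*} [CommRing S] {φ : R →+* S}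
    (hinj : Injective φ) (hint : φ.IsIntegral) {p : ι → Ideal R} (hmax : ∀ i, (p i).IsMaximal) :
    comap φ (map φ (⨅ i, p i)) = ⨅ i, p i := by
  refine le_antisymm (le_iInf fun i => ?_) le_comap_map
  have hne : map φ (p i) ≠ ⊤ := (map_eq_top_iff φ hinj hint).not.mpr (hmax i).ne_top
  calc comap φ (map φ (⨅ i, p i)) ≤ comap φ (map φ (p i)) := comap_mono (map_mono (iInf_le p i))
    _ = p i := comap_map_eq_self_of_isMaximal φ hne

end Ideal

theorem index_eq_iff_conductor_dvd_general {K : Type*} [Field K] [NumberField K]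
    (O : Subring (𝓞 K))
    (f : Ideal (𝓞 K)) (hf : ∀ a : 𝓞 K, a ∈ f ↔ ∀ x : 𝓞 K, a * x ∈ O)
    {k : ℕ} (p : Fin k → Ideal O) (hpprime : ∀ i, (p i).IsPrime) (hpne : ∀ i, p i ≠ ⊥)
    (hpdist : Function.Injective p)
    (l : Fin k → ℕ)
    (P : (i : Fin k) → Fin (l i) → Ideal (𝓞 K))
    (e : (i : Fin k) → Fin (l i) → ℕ)
    (hfact : ∀ i, (p i).map O.subtype = ∏ j, P i j ^ e i j) :
    (O.toAddSubgroup.index * ∏ i, Nat.card (O ⧸ p i) =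
        ∏ i, ∏ j, Ideal.absNorm (P i j) ^ e i j) ↔
      (∏ i, ∏ j, P i j ^ e i j) ≤ f := by
  -- makes `Ring.HasFiniteQuotients O` available, as `O` is a domain finite over `ℤ`
  have : Module.Finite ℤ O := inferInstanceAs (Module.Finite ℤ O.toAddSubgroup.toIntSubmodule)
  have hmax (i : Fin k) : (p i).IsMaximal :=
    have := hpprime i
    Ring.HasFiniteQuotients.maximalOfPrime (hpne i)
  have hcop := Ideal.pairwise_isCoprime_of_isMaximal hmax hpdist
  have hintegral : O.subtype.IsIntegral := fun x => (RingOfIntegers.isIntegral x).tower_top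
  have hprod_eq_iInf : ∏ i, p i = ⨅ i, p i := by
    simpa using Ideal.prod_eq_iInf_of_pairwise_isCoprime (s := .univ) fun i _ j _ hij => hcop hij
  set 𝔓 := ∏ i, ∏ j, P i j ^ e i j
  have h𝔓_eq_prod : 𝔓 = ∏ i, (p i).map O.subtype := by simp only [𝔓, hfact]
  have h𝔓_eq_map : 𝔓 = (⨅ i, p i).map O.subtype := by
    rw [h𝔓_eq_prod, ← hprod_eq_iInf]
    exact (map_prod (Ideal.mapHom O.subtype) p .univ).symm
  have h𝔓_ne_bot : 𝔓 ≠ ⊥ := by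
    rw [h𝔓_eq_prod]
    exact Finset.prod_ne_zero_iff.mpr fun i _ =>
      (Ideal.map_eq_bot_iff_of_injective Subtype.val_injective).not.mpr (hpne i)
  have hcard : ∏ i, Nat.card (O ⧸ p i) = 𝔓.toAddSubgroup.relIndex O.toAddSubgroup := by
    rw [← Ideal.natCard_quotient_iInf hcop,
      ← Ideal.comap_map_iInf_of_isMaximal Subtype.val_injective hintegral hmax, ← h𝔓_eq_map]
    rfl
  have hnorm : ∏ i, ∏ j, Ideal.absNorm (P i j) ^ e i j = 𝔓.toAddSubgroup.index := by
    rw [← Ideal.absNorm_eq_index]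
    simp only [𝔓, map_prod, map_pow]
  rw [hcard, hnorm, Ideal.le_conductor_iff hf]
  exact AddSubgroup.index_mul_relIndex_eq_index_iff_le (Ideal.absNorm_eq_zero_iff.not.mpr h𝔓_ne_bot)

/-- Equality in the index bound `[𝓞 K : O] = ∏ i (1/[O : p i]) ∏ j N(P i j) ^ (e i j)` holds
if and only if the conductor `f` of `O` divides `∏ i ∏ j (P i j) ^ (e i j)`. -/
theorem index_eq_iff_conductor_dvd {K : Type*} [Field K] [NumberField K]
    (O : Subring (𝓞 K)) (hO : O.toAddSubgroup.index ≠ 0)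
    (f : Ideal (𝓞 K)) (hf : ∀ a : 𝓞 K, a ∈ f ↔ ∀ x : 𝓞 K, a * x ∈ O)
    {k : ℕ} (p : Fin k → Ideal O) (hpprime : ∀ i, (p i).IsPrime) (hpne : ∀ i, p i ≠ ⊥)
    (hpdist : Function.Injective p)
    (l : Fin k → ℕ) (hl : ∀ i, 1 ≤ l i)
    (P : (i : Fin k) → Fin (l i) → Ideal (𝓞 K)) (hPprime : ∀ i j, (P i j).IsPrime)
    (hPdist : ∀ i, Function.Injective (P i))
    (e : (i : Fin k) → Fin (l i) → ℕ) (he : ∀ i j, 1 ≤ e i j)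
    (hfact : ∀ i, (p i).map O.subtype = ∏ j, P i j ^ e i j) :
    (O.toAddSubgroup.index * ∏ i, Nat.card (O ⧸ p i) =
        ∏ i, ∏ j, Ideal.absNorm (P i j) ^ e i j) ↔
      (∏ i, ∏ j, P i j ^ e i j) ≤ f :=
  index_eq_iff_conductor_dvd_general O f hf p hpprime hpne hpdist l P e hfact
end

section
/- Let K be a number field with ring of integers O_K, and let ω, η ∈ O_K be such that ω² − 4η generates a squarefree ideal that is relatively prime to 2, and such that h = X² − ωX + η is irreducible over K. Let α be a root of h and L = K(α). Then the ring of integers of L equals O_K[α]. -/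
open NumberField Polynomial

/-!
Write an integral element of `L = K(α)` as `x = u + vα` with `u, v ∈ K`. Unless `x ∈ K`, its
minimal polynomial is `X² − tX + n` with `t = 2u + vω`, `n = u² + uvω + v²η`, so `t, n ∈ 𝓞 K`,
and `t² − 4n = (ω² − 4η) v²`. Then `((ω² − 4η) v)² = (ω² − 4η)(t² − 4n)` is integral, and since
`ω² − 4η` is squarefree it divides `(ω² − 4η) v`, i.e. `v ∈ 𝓞 K`; finally `u = x − vα ∈ 𝓞 K`.
-/

theorem exists_eq_add_mul_of_mem_adjoin {R A : Type*} [CommRing R] [Ring A] [Algebra R A]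
    {h : R[X]} (hmonic : h.Monic) (hdeg : h.natDegree = 2) {α : A} (hα : aeval α h = 0)
    {z : A} (hz : z ∈ Algebra.adjoin R {α}) :
    ∃ u v : R, z = algebraMap R A u + algebraMap R A v * α := by
  rw [Algebra.adjoin_singleton_eq_range_aeval] at hz
  obtain ⟨p, rfl⟩ := hz
  have hlt : (p %ₘ h).natDegree < 2 :=
    hdeg ▸ natDegree_modByMonic_lt p hmonic fun h1 ↦ by simp [h1] at hdeg
  refine ⟨(p %ₘ h).coeff 0, (p %ₘ h).coeff 1, ?_⟩
  change aeval α p = _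
  conv_lhs => rw [← aeval_modByMonic_eq_self_of_root hα,
    eq_X_add_C_of_natDegree_le_one (p := p %ₘ h) (by omega)]
  simp only [map_add, map_mul, aeval_C, aeval_X]
  rw [add_comm]

theorem aeval_add_mul_eq_zero {K A : Type*} [CommRing K] [CommRing A] [Algebra K A]
    {ω η : K} {α : A} (hα : aeval α (X ^ 2 - C ω * X + C η) = 0) (u v : K) :
    aeval (algebraMap K A u + algebraMap K A v * α)
      (X ^ 2 - C (2 * u + v * ω) * X + C (u ^ 2 + u * v * ω + v ^ 2 * η)) = 0 := by
  simp only [map_add, map_sub, map_mul, map_pow, aeval_X, aeval_C, map_ofNat] at hα ⊢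
  linear_combination algebraMap K A v ^ 2 * hα

theorem minpoly_eq_of_natDegree_eq_two {K L : Type*} [Field K] [Ring L] [Nontrivial L]
    [Algebra K L] {x : L} (hxK : x ∉ (algebraMap K L).range) {q : K[X]} (hmonic : q.Monic)
    (hdeg : q.natDegree = 2) (hq : aeval x q = 0) : minpoly K x = q := by
  have hint : IsIntegral K x := ⟨q, hmonic, hq⟩
  refine (eq_of_monic_of_dvd_of_natDegree_le (minpoly.monic hint) hmonic
    (minpoly.dvd K x hq) ?_).symm
  exact hdeg ▸ (minpoly.two_le_natDegree_iff hint).mpr hxK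

section IntegrallyClosed

variable {R K L : Type*} [CommRing R] [IsIntegrallyClosed R] [Field K]
  [Algebra R K] [IsFractionRing R K] [Field L] [Algebra K L] [Algebra R L] [IsScalarTower R K L]

theorem discr_mem_range_of_isIntegral [IsDomain R] {x : L} (hx : IsIntegral R x)
    (hxK : x ∉ (algebraMap K L).range) {t n : K} (hq : aeval x (X ^ 2 - C t * X + C n) = 0) :
    t ^ 2 - 4 * n ∈ (algebraMap R K).range := by
  have hmin : (minpoly R x).map (algebraMap R K) = X ^ 2 - C t * X + C n := by
    rw [← minpoly.isIntegrallyClosed_eq_field_fractions' K hx]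
    exact minpoly_eq_of_natDegree_eq_two hxK (by monicity!) (by compute_degree!) hq
  have hcoeff (i : ℕ) : (X ^ 2 - C t * X + C n).coeff i ∈ (algebraMap R K).range :=
    hmin ▸ coeff_map (algebraMap R K) i ▸ RingHom.mem_range_self _ _
  have ht : -t ∈ (algebraMap R K).range := by simpa using hcoeff 1
  have hn : n ∈ (algebraMap R K).range := by simpa using hcoeff 0
  rw [← neg_sq]
  exact sub_mem (pow_mem ht 2) (mul_mem (natCast_mem _ 4) hn)

theorem mem_adjoin_of_isIntegral_of_eq_add_mul {x α : L} (hx : IsIntegral R x)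
    (hα : IsIntegral R α) {u : K} {v : R} (hxuv : x = algebraMap K L u + algebraMap R L v * α) :
    x ∈ Algebra.adjoin R {α} := by
  have hu : IsIntegral R (algebraMap K L u) := by
    rw [eq_sub_of_add_eq hxuv.symm]
    exact hx.sub (isIntegral_algebraMap.mul hα)
  obtain ⟨u₀, rfl⟩ := IsIntegrallyClosed.isIntegral_iff.mp
    ((isIntegral_algebraMap_iff (algebraMap K L).injective).mp hu)
  rw [hxuv, ← IsScalarTower.algebraMap_apply]
  exact add_mem (Subalgebra.algebraMap_mem _ u₀)
    (mul_mem (Subalgebra.algebraMap_mem _ v) (Algebra.self_mem_adjoin_singleton R α))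

end IntegrallyClosed

theorem mem_range_of_squarefree_mul_sq_mem_range {R K : Type*} [CommRing R] [IsDedekindDomain R]
    [Field K] [Algebra R K] [IsFractionRing R K] {d : R}
    (hd : Squarefree (Ideal.span {d} : Ideal R)) {v : K}
    (hv : algebraMap R K d * v ^ 2 ∈ (algebraMap R K).range) : v ∈ (algebraMap R K).range := by
  obtain ⟨m, hm⟩ := hv
  have hd0 : d ≠ 0 := fun h0 ↦ hd.ne_zero (Ideal.span_singleton_eq_bot.mpr h0)
  have hsq : (algebraMap R K d * v) ^ 2 = algebraMap R K (d * m) := by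
    rw [map_mul, hm]
    ring
  obtain ⟨e, he⟩ : algebraMap R K d * v ∈ (algebraMap R K).range :=
    IsIntegrallyClosed.isIntegral_iff.mp ⟨X ^ 2 - C (d * m), by monicity!, by
      rw [← aeval_def]
      simp [hsq]⟩
  have hde : d ∣ e := by
    have he2 : e ^ 2 = d * m := IsFractionRing.injective R K (by rw [map_pow, he, hsq])
    rw [← Ideal.span_singleton_le_span_singleton, ← Ideal.dvd_iff_le,
      ← hd.dvd_pow_iff_dvd two_ne_zero, Ideal.span_singleton_pow, Ideal.dvd_iff_le,
      Ideal.span_singleton_le_span_singleton, he2]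
    exact dvd_mul_right d m
  obtain ⟨f, rfl⟩ := hde
  refine ⟨f, mul_left_cancel₀ ((map_ne_zero_iff _ (IsFractionRing.injective R K)).mpr hd0) ?_⟩
  rw [← map_mul, he]

theorem ringOfIntegers_eq_adjoin_root_general {K L : Type*} [Field K] [NumberField K]
    [Field L] [Algebra K L] [Algebra (𝓞 K) L] [IsScalarTower (𝓞 K) K L]
    (ω η : 𝓞 K)
    (hsq : Squarefree (Ideal.span {ω ^ 2 - 4 * η} : Ideal (𝓞 K)))
    (α : L)
    (hroot : aeval α
      (X ^ 2 - C (algebraMap (𝓞 K) K ω) * X + C (algebraMap (𝓞 K) K η)) = 0)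
    (hgen : IntermediateField.adjoin K {α} = ⊤) :
    Algebra.adjoin (𝓞 K) {α} = integralClosure (𝓞 K) L := by
  have hmonic : (X ^ 2 - C (algebraMap (𝓞 K) K ω) * X + C (algebraMap (𝓞 K) K η)).Monic := by
    monicity!
  have hαR : IsIntegral (𝓞 K) α := by
    refine ⟨X ^ 2 - C ω * X + C η, by monicity!, ?_⟩
    rw [← aeval_def, ← aeval_map_algebraMap K]
    simpa using hroot
  have hadjoin : Algebra.adjoin K {α} = ⊤ := by
    rw [← IntermediateField.adjoin_simple_toSubalgebra_of_isAlgebraic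
      (IsIntegral.isAlgebraic ⟨_, hmonic, hroot⟩), hgen, IntermediateField.top_toSubalgebra]
  refine le_antisymm (adjoin_le_integralClosure hαR) fun x (hx : IsIntegral _ x) ↦ ?_
  by_cases hxK : x ∈ (algebraMap K L).range
  · obtain ⟨k, rfl⟩ := hxK
    exact mem_adjoin_of_isIntegral_of_eq_add_mul hx hαR (u := k) (v := 0) (by simp)
  obtain ⟨u, v, rfl⟩ := exists_eq_add_mul_of_mem_adjoin hmonic (by compute_degree!) hroot
    (hadjoin ▸ Algebra.mem_top : x ∈ Algebra.adjoin K {α})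
  have hdisc := discr_mem_range_of_isIntegral hx hxK (aeval_add_mul_eq_zero hroot u v)
  obtain ⟨v₀, rfl⟩ := mem_range_of_squarefree_mul_sq_mem_range hsq (v := v) (by
    convert hdisc using 1
    simp only [map_sub, map_mul, map_pow, map_ofNat]
    ring)
  exact mem_adjoin_of_isIntegral_of_eq_add_mul hx hαR
    (by rw [IsScalarTower.algebraMap_apply (𝓞 K) K L])

/-- If `ω² − 4η` is squarefree and relatively prime to `2`, `h = X² − ωX + η` is irreducible
over `K` with root `α`, and `L = K(α)`, then the ring of integers of `L` is `𝓞 K[α]`. -/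
theorem ringOfIntegers_eq_adjoin_root {K L : Type*} [Field K] [NumberField K]
    [Field L] [NumberField L] [Algebra K L] [Algebra (𝓞 K) L] [IsScalarTower (𝓞 K) K L]
    (ω η : 𝓞 K)
    (hsq : Squarefree (Ideal.span {ω ^ 2 - 4 * η} : Ideal (𝓞 K)))
    (hcop : (Ideal.span {ω ^ 2 - 4 * η} : Ideal (𝓞 K)) ⊔ Ideal.span {(2 : 𝓞 K)} = ⊤)
    (hirr : Irreducible
      (X ^ 2 - C (algebraMap (𝓞 K) K ω) * X + C (algebraMap (𝓞 K) K η)))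
    (α : L)
    (hroot : aeval α
      (X ^ 2 - C (algebraMap (𝓞 K) K ω) * X + C (algebraMap (𝓞 K) K η)) = 0)
    (hgen : IntermediateField.adjoin K {α} = ⊤) :
    Algebra.adjoin (𝓞 K) {α} = integralClosure (𝓞 K) L :=
  ringOfIntegers_eq_adjoin_root_general ω η hsq α hroot hgen
end

section
/- Let K be a number field with ring of integers O_K, and let ω, η ∈ O_K with ω² − 4η squarefree and relatively prime to 2, and h = X² − ωX + η irreducible over K with root α. Then the relative discriminant of K(α) over K is the principal ideal (ω² − 4η). -/
/-!
Write `D = ω² - 4η` and `δ = 2α - ω`, so that `δ² = D`. An algebraic integer `x = a + bα`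
(`a, b ∈ K`) satisfies `2x - Tr x = bδ`, hence `bD = (bδ)δ` and `b²D = (bδ)²` lie in `O_K`.
From `(bD)² = (b²D)·D` and squarefreeness of `(D)` we get `D ∣ bD`, so `b ∈ O_K` and then
`a ∈ O_K`: the ring of integers of `L` is `O_K[α]`. The different is therefore generated by
`h'(α) = δ`, whose norm is `±D` because `δ² = D` and `[L : K] = 2`.
-/

open NumberField Polynomial

namespace QuadraticExtension

section Field

variable {K L : Type*} [Field K] [Field L] [Algebra K L] {ω η : K} {α : L}

lemma natDegree_X_sq_sub_C_mul_X_add_C (ω η : K) : (X ^ 2 - C ω * X + C η).natDegree = 2 := by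
  compute_degree!

lemma sq_eq_of_minpoly_eq (hmin : minpoly K α = X ^ 2 - C ω * X + C η) :
    α ^ 2 = algebraMap K L ω * α - algebraMap K L η := by
  have := minpoly.aeval K α
  rw [hmin] at this
  simp only [map_add, map_sub, map_mul, map_pow, aeval_X, aeval_C] at this
  linear_combination this

lemma isIntegral_of_minpoly_eq (hmin : minpoly K α = X ^ 2 - C ω * X + C η) :
    IsIntegral K α := by
  by_contra h
  have := natDegree_X_sq_sub_C_mul_X_add_C ω η
  rw [← hmin, minpoly.eq_zero h, natDegree_zero] at this
  exact absurd this (by norm_num)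

noncomputable def powerBasis (hmin : minpoly K α = X ^ 2 - C ω * X + C η)
    (hadj : Algebra.adjoin K {α} = ⊤) : PowerBasis K L :=
  PowerBasis.ofAdjoinEqTop' (isIntegral_of_minpoly_eq hmin) hadj

lemma powerBasis_gen (hmin : minpoly K α = X ^ 2 - C ω * X + C η)
    (hadj : Algebra.adjoin K {α} = ⊤) :
    (powerBasis hmin hadj).gen = α :=
  PowerBasis.ofAdjoinEqTop'_gen _ _

lemma powerBasis_dim (hmin : minpoly K α = X ^ 2 - C ω * X + C η)
    (hadj : Algebra.adjoin K {α} = ⊤) :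
    (powerBasis hmin hadj).dim = 2 := by
  rw [powerBasis, PowerBasis.ofAdjoinEqTop'_dim, hmin, natDegree_X_sq_sub_C_mul_X_add_C]

lemma finrank_eq_two (hmin : minpoly K α = X ^ 2 - C ω * X + C η)
    (hadj : Algebra.adjoin K {α} = ⊤) :
    Module.finrank K L = 2 := by
  rw [(powerBasis hmin hadj).finrank, powerBasis_dim hmin hadj]

lemma trace_gen (hmin : minpoly K α = X ^ 2 - C ω * X + C η)
    (hadj : Algebra.adjoin K {α} = ⊤) :
    Algebra.trace K L α = ω := by
  have := (powerBasis hmin hadj).trace_gen_eq_nextCoeff_minpoly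
  rw [powerBasis_gen hmin hadj, hmin,
    nextCoeff_of_natDegree_pos (by rw [natDegree_X_sq_sub_C_mul_X_add_C]; norm_num),
    natDegree_X_sq_sub_C_mul_X_add_C] at this
  simpa [coeff_X, coeff_C] using this

lemma trace_algebraMap_add_mul (hmin : minpoly K α = X ^ 2 - C ω * X + C η)
    (hadj : Algebra.adjoin K {α} = ⊤) (a b : K) :
    Algebra.trace K L (algebraMap K L a + algebraMap K L b * α) = 2 * a + b * ω := by
  rw [map_add, ← Algebra.smul_def, map_smul, trace_gen hmin hadj, Algebra.trace_algebraMap,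
    finrank_eq_two hmin hadj, smul_eq_mul]
  norm_num

lemma exists_eq_algebraMap_add_mul (hmin : minpoly K α = X ^ 2 - C ω * X + C η)
    (hadj : Algebra.adjoin K {α} = ⊤) (x : L) :
    ∃ a b : K, x = algebraMap K L a + algebraMap K L b * α := by
  obtain ⟨f, hfdeg, rfl⟩ := (powerBasis hmin hadj).exists_eq_aeval x
  rw [powerBasis_dim hmin hadj] at hfdeg
  refine ⟨f.coeff 0, f.coeff 1, ?_⟩
  rw [eq_X_add_C_of_natDegree_le_one (by omega : f.natDegree ≤ 1), powerBasis_gen hmin hadj]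
  simp [add_comm]

end Field

lemma dvd_of_sq_eq_mul_of_squarefree_span {R : Type*} [CommRing R] [IsDedekindDomain R]
    {D u v : R} (hD : Squarefree (Ideal.span {D})) (h : u ^ 2 = v * D) : D ∣ u := by
  have hdvd : Ideal.span {D} ∣ Ideal.span {u} ^ 2 := by
    rw [Ideal.span_singleton_pow, Ideal.dvd_iff_le, Ideal.span_singleton_le_span_singleton, h]
    exact dvd_mul_left D v
  rwa [hD.dvd_pow_iff_dvd two_ne_zero, Ideal.dvd_iff_le,
    Ideal.span_singleton_le_span_singleton] at hdvd

section IntegrallyClosed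

variable {A K L : Type*} [CommRing A] [Field K] [Field L] [Algebra A K] [Algebra K L]
  [Algebra A L] [IsScalarTower A K L]

lemma exists_algebraMap_eq_of_isIntegral [IsIntegrallyClosed A] [IsFractionRing A K] {c : K}
    (hc : IsIntegral A (algebraMap K L c)) : ∃ r : A, algebraMap A K r = c :=
  IsIntegrallyClosed.isIntegral_iff.mp <|
    (isIntegral_algebraMap_iff (algebraMap K L).injective).mp hc

variable {ω η : A} {α : L}

lemma sq_eq_of_minpoly_eq_map
    (hmin : minpoly K α = X ^ 2 - C (algebraMap A K ω) * X + C (algebraMap A K η)) :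
    α ^ 2 = algebraMap A L ω * α - algebraMap A L η := by
  simpa only [← IsScalarTower.algebraMap_apply] using sq_eq_of_minpoly_eq hmin

lemma isIntegral_of_minpoly_eq_map
    (hmin : minpoly K α = X ^ 2 - C (algebraMap A K ω) * X + C (algebraMap A K η)) :
    IsIntegral A α := by
  refine ⟨X ^ 2 - C ω * X + C η, by monicity!, ?_⟩
  rw [← aeval_def]
  simp only [map_add, map_sub, map_mul, map_pow, aeval_X, aeval_C]
  linear_combination sq_eq_of_minpoly_eq_map hmin

lemma exists_algebraMap_eq_mul_discr_of_isIntegral [IsIntegrallyClosed A] [IsFractionRing A K]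
    (hmin : minpoly K α = X ^ 2 - C (algebraMap A K ω) * X + C (algebraMap A K η))
    (hadj : Algebra.adjoin K {α} = ⊤) {a b : K}
    (hx : IsIntegral A (algebraMap K L a + algebraMap K L b * α)) :
    ∃ u v : A, algebraMap A K u = b * algebraMap A K (ω ^ 2 - 4 * η) ∧
      algebraMap A K v = b ^ 2 * algebraMap A K (ω ^ 2 - 4 * η) := by
  have hα := sq_eq_of_minpoly_eq_map hmin
  have : FiniteDimensional K L := (powerBasis hmin hadj).finite
  have htr := (Algebra.isIntegral_trace (L := K) hx).algebraMap (B := L)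
  rw [trace_algebraMap_add_mul hmin hadj] at htr
  have hαA : IsIntegral A α := isIntegral_of_minpoly_eq_map hmin
  have hδ : IsIntegral A (algebraMap K L b * (2 * α - algebraMap A L ω)) := by
    have e : algebraMap K L b * (2 * α - algebraMap A L ω) =
        (2 : ℕ) * (algebraMap K L a + algebraMap K L b * α) -
          algebraMap K L (2 * a + b * algebraMap A K ω) := by
      simp only [map_add, map_mul, map_ofNat, Nat.cast_ofNat, ← IsScalarTower.algebraMap_apply]
      ring
    rw [e]
    exact ((isIntegral_natCast 2).mul hx).sub htr
  have hu : IsIntegral A (algebraMap K L (b * algebraMap A K (ω ^ 2 - 4 * η))) := by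
    have e : algebraMap K L (b * algebraMap A K (ω ^ 2 - 4 * η)) =
        algebraMap K L b * (2 * α - algebraMap A L ω) * ((2 : ℕ) * α - algebraMap A L ω) := by
      simp only [map_mul, map_sub, map_pow, map_ofNat, Nat.cast_ofNat,
        ← IsScalarTower.algebraMap_apply]
      linear_combination (-4 * algebraMap K L b) * hα
    rw [e]
    exact hδ.mul (((isIntegral_natCast 2).mul hαA).sub isIntegral_algebraMap)
  have hv : IsIntegral A (algebraMap K L (b ^ 2 * algebraMap A K (ω ^ 2 - 4 * η))) := by
    have e : algebraMap K L (b ^ 2 * algebraMap A K (ω ^ 2 - 4 * η)) =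
        (algebraMap K L b * (2 * α - algebraMap A L ω)) ^ 2 := by
      simp only [map_mul, map_sub, map_pow, map_ofNat, ← IsScalarTower.algebraMap_apply]
      linear_combination (-4 * algebraMap K L b ^ 2) * hα
    rw [e]
    exact hδ.pow 2
  obtain ⟨u, hu⟩ := exists_algebraMap_eq_of_isIntegral hu
  obtain ⟨v, hv⟩ := exists_algebraMap_eq_of_isIntegral hv
  exact ⟨u, v, hu, hv⟩

lemma exists_eq_algebraMap_add_mul_of_isIntegral [IsDedekindDomain A] [IsFractionRing A K]
    (hmin : minpoly K α = X ^ 2 - C (algebraMap A K ω) * X + C (algebraMap A K η))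
    (hadj : Algebra.adjoin K {α} = ⊤) (hsq : Squarefree (Ideal.span {ω ^ 2 - 4 * η}))
    {x : L} (hx : IsIntegral A x) : ∃ a b : A, x = algebraMap A L a + algebraMap A L b * α := by
  obtain ⟨a, b, rfl⟩ := exists_eq_algebraMap_add_mul hmin hadj x
  obtain ⟨u, v, hu, hv⟩ := exists_algebraMap_eq_mul_discr_of_isIntegral hmin hadj hx
  have hD : algebraMap A K (ω ^ 2 - 4 * η) ≠ 0 := by
    refine (map_ne_zero_iff _ (IsFractionRing.injective A K)).mpr fun h0 ↦ ?_
    rw [h0, Ideal.span_singleton_eq_bot.mpr rfl] at hsq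
    exact not_squarefree_zero hsq
  have huv : u ^ 2 = v * (ω ^ 2 - 4 * η) := IsFractionRing.injective A K <| by
    rw [map_pow, map_mul, hu, hv]
    ring
  obtain ⟨b₀, rfl⟩ := dvd_of_sq_eq_mul_of_squarefree_span hsq huv
  have hb : algebraMap A K b₀ = b := mul_left_cancel₀ hD (by rw [← map_mul, hu, mul_comm])
  have ha : IsIntegral A (algebraMap K L a) := by
    have e : algebraMap K L a =
        algebraMap K L a + algebraMap K L b * α - algebraMap A L b₀ * α := by
      rw [IsScalarTower.algebraMap_apply A K L, hb]
      ring
    rw [e]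
    exact hx.sub (isIntegral_algebraMap.mul (isIntegral_of_minpoly_eq_map hmin))
  obtain ⟨a₀, rfl⟩ := exists_algebraMap_eq_of_isIntegral ha
  refine ⟨a₀, b₀, ?_⟩
  rw [IsScalarTower.algebraMap_apply A K L, IsScalarTower.algebraMap_apply A K L, hb]

end IntegrallyClosed

section IntegralClosure

variable {A K L B : Type*} [CommRing A] [Field K] [Field L] [CommRing B] [Algebra A K]
  [Algebra K L] [Algebra A L] [IsScalarTower A K L] [Algebra A B] [Algebra B L]
  [IsScalarTower A B L] [IsIntegralClosure B A L] {ω η : A} {α : L}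

lemma adjoin_eq_top_of_squarefree [IsDedekindDomain A] [IsFractionRing A K]
    (hmin : minpoly K α = X ^ 2 - C (algebraMap A K ω) * X + C (algebraMap A K η))
    (hadj : Algebra.adjoin K {α} = ⊤) (hsq : Squarefree (Ideal.span {ω ^ 2 - 4 * η}))
    {β : B} (hβ : algebraMap B L β = α) : Algebra.adjoin A {β} = ⊤ := by
  refine eq_top_iff.mpr fun x _ ↦ ?_
  obtain ⟨a, b, hx⟩ := exists_eq_algebraMap_add_mul_of_isIntegral hmin hadj hsq
    (IsIntegralClosure.isIntegral A L x).algebraMap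
  have hx : x = algebraMap A B a + algebraMap A B b * β :=
    IsIntegralClosure.algebraMap_injective B A L <| by
      rw [hx, map_add, map_mul, hβ, ← IsScalarTower.algebraMap_apply,
        ← IsScalarTower.algebraMap_apply]
  rw [hx]
  exact add_mem (Subalgebra.algebraMap_mem _ a)
    (mul_mem (Subalgebra.algebraMap_mem _ b) (Algebra.self_mem_adjoin_singleton A β))

lemma minpoly_eq_of_minpoly_eq_map [IsDomain A] [IsIntegrallyClosed A] [IsFractionRing A K]
    (hmin : minpoly K α = X ^ 2 - C (algebraMap A K ω) * X + C (algebraMap A K η))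
    {β : B} (hβ : algebraMap B L β = α) : minpoly A β = X ^ 2 - C ω * X + C η := by
  rw [← minpoly.algebraMap_eq (IsIntegralClosure.algebraMap_injective B A L), hβ]
  refine map_injective _ (IsFractionRing.injective A K) ?_
  rw [← minpoly.isIntegrallyClosed_eq_field_fractions' K (isIntegral_of_minpoly_eq_map hmin),
    hmin]
  simp

lemma aeval_derivative_minpoly_eq [IsDomain A] [IsIntegrallyClosed A] [IsFractionRing A K]
    (hmin : minpoly K α = X ^ 2 - C (algebraMap A K ω) * X + C (algebraMap A K η))
    {β : B} (hβ : algebraMap B L β = α) :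
    aeval β (derivative (minpoly A β)) = 2 * β - algebraMap A B ω := by
  rw [minpoly_eq_of_minpoly_eq_map hmin hβ]
  simp [one_add_one_eq_two, map_ofNat]

lemma two_mul_sub_sq_eq
    (hmin : minpoly K α = X ^ 2 - C (algebraMap A K ω) * X + C (algebraMap A K η))
    {β : B} (hβ : algebraMap B L β = α) :
    (2 * β - algebraMap A B ω) ^ 2 = algebraMap A B (ω ^ 2 - 4 * η) := by
  apply IsIntegralClosure.algebraMap_injective B A L
  simp only [map_pow, map_sub, map_mul, map_ofNat, hβ, ← IsScalarTower.algebraMap_apply]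
  linear_combination 4 * sq_eq_of_minpoly_eq_map hmin

lemma differentIdeal_eq_span_aeval_derivative [IsDomain A] [IsIntegrallyClosed A]
    [IsFractionRing A K] [IsDedekindDomain B] [Module.IsTorsionFree A B] [FiniteDimensional K L]
    [Algebra.IsSeparable K L]
    {β : B} (hA : Algebra.adjoin A {β} = ⊤) (hK : Algebra.adjoin K {algebraMap B L β} = ⊤) :
    differentIdeal A B = Ideal.span {aeval β (derivative (minpoly A β))} := by
  simpa [conductor_eq_top_of_adjoin_eq_top hA] using conductor_mul_differentIdeal A K L β hK

lemma span_intNorm_eq_of_sq_eq [IsDomain A] [IsIntegrallyClosed A] [IsFractionRing A K]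
    [IsDomain B] [IsIntegrallyClosed B] [Algebra.IsIntegral A B] [Module.IsTorsionFree A B]
    (hrank : Module.finrank K L = 2) {γ : B} {D : A} (hγ : γ ^ 2 = algebraMap A B D) :
    Ideal.span {Algebra.intNorm A B γ} = Ideal.span {D} := by
  have : FiniteDimensional K L := Module.finite_of_finrank_eq_succ hrank
  have hsq : Algebra.intNorm A B γ ^ 2 = D ^ 2 := IsFractionRing.injective A K <| by
    rw [map_pow, Algebra.algebraMap_intNorm (L := L), ← map_pow, ← map_pow, hγ,
      ← IsScalarTower.algebraMap_apply, IsScalarTower.algebraMap_apply A K L,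
      Algebra.norm_algebraMap, hrank, map_pow]
  rcases sq_eq_sq_iff_eq_or_eq_neg.mp hsq with h | h
  · rw [h]
  · rw [h, Ideal.span_singleton_neg]

end IntegralClosure

end QuadraticExtension

open QuadraticExtension in
theorem relative_discriminant_eq_general {K L : Type*} [Field K] [NumberField K]
    [Field L] [NumberField L] [Algebra K L]
    (ω η : 𝓞 K)
    (hsq : Squarefree (Ideal.span {ω ^ 2 - 4 * η} : Ideal (𝓞 K)))
    (hirr : Irreducible
      (X ^ 2 - C (algebraMap (𝓞 K) K ω) * X + C (algebraMap (𝓞 K) K η)))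
    (α : L)
    (hroot : aeval α
      (X ^ 2 - C (algebraMap (𝓞 K) K ω) * X + C (algebraMap (𝓞 K) K η)) = 0)
    (hgen : IntermediateField.adjoin K {α} = ⊤) :
    Ideal.spanNorm (𝓞 K) (differentIdeal (𝓞 K) (𝓞 L)) =
      Ideal.span {ω ^ 2 - 4 * η} := by
  have hmin := (minpoly.eq_of_irreducible_of_monic hirr hroot (by monicity!)).symm
  have hadj : Algebra.adjoin K {α} = ⊤ := by
    rw [← IntermediateField.adjoin_simple_toSubalgebra_of_isAlgebraic
      (isIntegral_of_minpoly_eq hmin).isAlgebraic, hgen, IntermediateField.top_toSubalgebra]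
  set β : 𝓞 L := IsIntegralClosure.mk' (𝓞 L) α (isIntegral_of_minpoly_eq_map hmin)
  have hβ : algebraMap (𝓞 L) L β = α := IsIntegralClosure.algebraMap_mk' _ _ _
  rw [differentIdeal_eq_span_aeval_derivative (K := K)
    (adjoin_eq_top_of_squarefree hmin hadj hsq hβ) (hβ ▸ hadj),
    aeval_derivative_minpoly_eq hmin hβ, Ideal.spanNorm_singleton]
  exact span_intNorm_eq_of_sq_eq (finrank_eq_two hmin hadj) (two_mul_sub_sq_eq hmin hβ)

/-- If `ω² − 4η` is squarefree and relatively prime to `2`, and `h = X² − ωX + η` is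
irreducible over `K` with root `α` generating `L = K(α)`, then the relative discriminant of
`L` over `K` (the norm of the different ideal) is the principal ideal `(ω² − 4η)`. -/
theorem relative_discriminant_eq {K L : Type*} [Field K] [NumberField K]
    [Field L] [NumberField L] [Algebra K L]
    (ω η : 𝓞 K)
    (hsq : Squarefree (Ideal.span {ω ^ 2 - 4 * η} : Ideal (𝓞 K)))
    (hcop : (Ideal.span {ω ^ 2 - 4 * η} : Ideal (𝓞 K)) ⊔ Ideal.span {(2 : 𝓞 K)} = ⊤)
    (hirr : Irreducible
      (X ^ 2 - C (algebraMap (𝓞 K) K ω) * X + C (algebraMap (𝓞 K) K η)))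
    (α : L)
    (hroot : aeval α
      (X ^ 2 - C (algebraMap (𝓞 K) K ω) * X + C (algebraMap (𝓞 K) K η)) = 0)
    (hgen : IntermediateField.adjoin K {α} = ⊤) :
    Ideal.spanNorm (𝓞 K) (differentIdeal (𝓞 K) (𝓞 L)) =
      Ideal.span {ω ^ 2 - 4 * η} :=
  relative_discriminant_eq_general ω η hsq hirr α hroot hgen
end

section
/- Let K be a number field, O_K its ring of integers, η a unit of O_K, and ω ∈ O_K such that ω² − 4η is squarefree and coprime to 2, and such that a root α of X² − ωX + η does not lie in K. Then α is a unit in the ring of integers of K(α), α⁻¹ = η⁻¹(ω − α), and O_{K(α)} = O_K[α] = O_K[α, α⁻¹]. -/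
/-!
Since `α(ω - α) = η`, the element `η⁻¹(ω - α)` is an integral inverse of `α`. For the ring of
integers, write an integral `z ∈ K(α)` as `x + yα` with `x, y ∈ K`. Then `2z - Tr z = y(2α - ω)`
is integral and its square is `y²Δ` with `Δ = ω² - 4η`, so `y²Δ ∈ 𝓞_K`. Hence `t = Δy` satisfies
`t² = Δ · y²Δ`, so `t ∈ 𝓞_K` and `(Δ) ∣ (t)²`; as `(Δ)` is squarefree, `Δ ∣ t`, i.e. `y ∈ 𝓞_K`.
Then `x = z - yα ∈ 𝓞_K` too, so `z ∈ 𝓞_K[α]`.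
-/

open NumberField Polynomial IntermediateField

section QuadraticRoot

variable {R A : Type*} [CommRing R] [CommRing A] [Algebra R A] {ω η : R} {α : A}

theorem isIntegral_of_sq_sub_mul_add_eq_zero
    (h : α ^ 2 - algebraMap R A ω * α + algebraMap R A η = 0) : IsIntegral R α := by
  refine ⟨X ^ 2 - C ω * X + C η, ?_, ?_⟩
  · rw [sub_eq_add_neg, add_assoc, ← neg_mul, ← C_neg]
    exact monic_X_pow_add (degree_linear_le.trans_lt (by norm_num))
  · simpa [← aeval_def] using h

theorem sq_two_mul_sub_eq_of_sq_sub_mul_add_eq_zero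
    (h : α ^ 2 - algebraMap R A ω * α + algebraMap R A η = 0) :
    (2 * α - algebraMap R A ω) ^ 2 = algebraMap R A (ω ^ 2 - 4 * η) := by
  simp only [map_sub, map_mul, map_pow, map_ofNat]
  linear_combination 4 * h

theorem mul_eq_one_of_sq_sub_mul_add_eq_zero {η : Rˣ}
    (h : α ^ 2 - algebraMap R A ω * α + algebraMap R A (η : R) = 0) :
    α * (algebraMap R A ((η⁻¹ : Rˣ) : R) * (algebraMap R A ω - α)) = 1 := by
  have hη : algebraMap R A ((η⁻¹ : Rˣ) : R) * algebraMap R A (η : R) = 1 := by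
    rw [← map_mul, Units.inv_mul, map_one]
  linear_combination -algebraMap R A ((η⁻¹ : Rˣ) : R) * h + hη

end QuadraticRoot

section QuadraticExtension

variable {K L : Type*} [Field K] [Field L] [Algebra K L] {a b : K} {α : L}

theorem minpoly_eq_of_sq_sub_mul_add_eq_zero (hα : α ∉ Set.range (algebraMap K L))
    (h : α ^ 2 - algebraMap K L a * α + algebraMap K L b = 0) :
    minpoly K α = X ^ 2 - C a * X + C b := by
  have hint : IsIntegral K α := isIntegral_of_sq_sub_mul_add_eq_zero h
  have hmonic : (X ^ 2 - C a * X + C b : K[X]).Monic := by monicity!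
  have hdeg : (X ^ 2 - C a * X + C b : K[X]).natDegree = 2 := by compute_degree!
  refine (eq_of_monic_of_dvd_of_natDegree_le (minpoly.monic hint) hmonic
    (minpoly.dvd K α (by simpa using h)) ?_).symm
  rw [hdeg]
  exact (minpoly.two_le_natDegree_iff hint).mpr hα

theorem exists_eq_algebraMap_add_smul_of_adjoin_eq_top (hint : IsIntegral K α)
    (hgen : K⟮α⟯ = ⊤) (hdeg : (minpoly K α).natDegree = 2) (z : L) :
    ∃ x y : K, z = algebraMap K L x + y • α := by
  have htop : Algebra.adjoin K {α} = ⊤ := by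
    rw [← adjoin_simple_toSubalgebra_of_isAlgebraic hint.isAlgebraic, hgen, top_toSubalgebra]
  obtain ⟨p, rfl⟩ : ∃ p : K[X], aeval α p = z := by
    rw [← AlgHom.mem_range, ← Algebra.adjoin_singleton_eq_range_aeval, htop]
    trivial
  have hr : (p %ₘ minpoly K α).natDegree ≤ 1 := by
    have := natDegree_modByMonic_lt p (minpoly.monic hint) (minpoly.ne_one K α)
    omega
  refine ⟨(p %ₘ minpoly K α).coeff 0, (p %ₘ minpoly K α).coeff 1, ?_⟩
  rw [← aeval_modByMonic_eq_self_of_root (minpoly.aeval K α), eq_X_add_C_of_natDegree_le_one hr]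
  simp [Algebra.smul_def, add_comm]

theorem finiteDimensional_of_adjoin_eq_top (hint : IsIntegral K α) (hgen : K⟮α⟯ = ⊤) :
    FiniteDimensional K L := by
  have := adjoin.finiteDimensional hint
  rw [hgen] at this
  exact topEquiv.toLinearEquiv.finiteDimensional

theorem trace_algebraMap_add_smul_of_minpoly_eq (hint : IsIntegral K α) (hgen : K⟮α⟯ = ⊤)
    (hmin : minpoly K α = X ^ 2 - C a * X + C b) (x y : K) :
    Algebra.trace K L (algebraMap K L x + y • α) = 2 * x + y * a := by
  have : FiniteDimensional K L := finiteDimensional_of_adjoin_eq_top hint hgen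
  have hdeg : (minpoly K α).natDegree = 2 := by rw [hmin]; compute_degree!
  have hfinrank : Module.finrank K L = 2 := by
    rw [← hdeg, ← adjoin.finrank hint, hgen, finrank_top']
  have htrace : Algebra.trace K L α = a := by
    rw [trace_eq_finrank_mul_minpoly_nextCoeff, hgen, IntermediateField.finrank_top,
      nextCoeff, hdeg, hmin]
    simp
  rw [map_add, map_smul, Algebra.trace_algebraMap, hfinrank, htrace, smul_eq_mul, nsmul_eq_mul]
  push_cast; ring

end QuadraticExtension

section Dedekind

variable {R K : Type*} [CommRing R] [IsDedekindDomain R] [Field K] [Algebra R K]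
  [IsFractionRing R K]

theorem dvd_of_dvd_sq_of_squarefree_span {Δ t : R} (hΔ : Squarefree (Ideal.span {Δ}))
    (h : Δ ∣ t ^ 2) : Δ ∣ t := by
  rw [← Ideal.span_singleton_le_span_singleton, ← Ideal.span_singleton_pow, ← Ideal.dvd_iff_le,
    hΔ.dvd_pow_iff_dvd two_ne_zero, Ideal.dvd_iff_le] at h
  exact Ideal.span_singleton_le_span_singleton.mp h

theorem isIntegral_of_isIntegral_sq_mul {Δ : R} (hΔ : Squarefree (Ideal.span {Δ})) {y : K}
    (h : IsIntegral R (y ^ 2 * algebraMap R K Δ)) : IsIntegral R y := by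
  obtain ⟨s, hs⟩ := IsIntegrallyClosed.isIntegral_iff.mp h
  have hΔy : IsIntegral R (algebraMap R K Δ * y) := by
    refine ⟨X ^ 2 - C (Δ * s), monic_X_pow_sub_C _ two_ne_zero, ?_⟩
    rw [← aeval_def]
    simp only [map_sub, map_pow, aeval_X, aeval_C, map_mul, hs]
    ring
  obtain ⟨t, ht⟩ := IsIntegrallyClosed.isIntegral_iff.mp hΔy
  have hts : t ^ 2 = Δ * s :=
    IsFractionRing.injective R K (by rw [map_pow, ht, map_mul, hs]; ring)
  obtain ⟨y', rfl⟩ := dvd_of_dvd_sq_of_squarefree_span hΔ ⟨s, hts⟩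
  have hΔ0 : algebraMap R K Δ ≠ 0 := by
    refine (map_ne_zero_iff _ (IsFractionRing.injective R K)).mpr fun h0 ↦ ?_
    rw [h0, Ideal.span_singleton_eq_bot.mpr rfl] at hΔ
    exact not_squarefree_zero hΔ
  have hy : y = algebraMap R K y' := mul_left_cancel₀ hΔ0 (by rw [← ht, map_mul])
  exact hy ▸ isIntegral_algebraMap

variable {L : Type*} [Field L] [Algebra K L] [Algebra R L] [IsScalarTower R K L]

theorem integralClosure_eq_adjoin_of_squarefree {ω η : R}
    (hsq : Squarefree (Ideal.span {ω ^ 2 - 4 * η})) {α : L}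
    (hroot : α ^ 2 - algebraMap R L ω * α + algebraMap R L η = 0) (hgen : K⟮α⟯ = ⊤)
    (hnotK : α ∉ Set.range (algebraMap K L)) :
    integralClosure R L = Algebra.adjoin R {α} := by
  have hintR : IsIntegral R α := isIntegral_of_sq_sub_mul_add_eq_zero hroot
  have hint : IsIntegral K α := hintR.tower_top
  have hmin := minpoly_eq_of_sq_sub_mul_add_eq_zero (a := algebraMap R K ω)
    (b := algebraMap R K η) hnotK (by simpa only [← IsScalarTower.algebraMap_apply] using hroot)
  have hdeg : (minpoly K α).natDegree = 2 := by rw [hmin]; compute_degree!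
  refine le_antisymm (fun z hz ↦ ?_) (Algebra.adjoin_le (Set.singleton_subset_iff.mpr hintR))
  obtain ⟨x, y, hxy⟩ := exists_eq_algebraMap_add_smul_of_adjoin_eq_top hint hgen hdeg z
  have hz : IsIntegral R z := hz
  have hw : IsIntegral R (2 * z - algebraMap K L (Algebra.trace K L z)) := by
    have : FiniteDimensional K L := finiteDimensional_of_adjoin_eq_top hint hgen
    exact (two_mul z ▸ hz.add hz).sub (Algebra.isIntegral_trace hz).algebraMap
  have hwsq : (2 * z - algebraMap K L (Algebra.trace K L z)) ^ 2 =
      algebraMap K L (y ^ 2 * algebraMap R K (ω ^ 2 - 4 * η)) := by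
    have hδ := sq_two_mul_sub_eq_of_sq_sub_mul_add_eq_zero hroot
    simp only [IsScalarTower.algebraMap_apply R K L] at hδ
    rw [hxy, trace_algebraMap_add_smul_of_minpoly_eq hint hgen hmin]
    simp only [map_mul, map_pow, map_add, map_ofNat, Algebra.smul_def] at hδ ⊢
    linear_combination algebraMap K L y ^ 2 * hδ
  have hy : IsIntegral R y := isIntegral_of_isIntegral_sq_mul hsq <| by
    rw [← isIntegral_algebraMap_iff (algebraMap K L).injective, ← hwsq]
    exact hw.pow 2
  obtain ⟨y, rfl⟩ := IsIntegrallyClosed.isIntegral_iff.mp hy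
  rw [algebraMap_smul K y α] at hxy
  have hx : IsIntegral R x := by
    rw [← isIntegral_algebraMap_iff (algebraMap K L).injective, eq_sub_of_add_eq hxy.symm]
    exact hz.sub (hintR.smul y)
  obtain ⟨x, rfl⟩ := IsIntegrallyClosed.isIntegral_iff.mp hx
  rw [hxy, ← IsScalarTower.algebraMap_apply R K L]
  exact add_mem (Subalgebra.algebraMap_mem _ x)
    (Subalgebra.smul_mem _ (Algebra.self_mem_adjoin_singleton R α) y)

end Dedekind

theorem Algebra.adjoin_insert_inv_eq_adjoin {R A : Type*} [CommRing R] [Field A] [Algebra R A]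
    {α : A} (h : α⁻¹ ∈ Algebra.adjoin R {α}) :
    Algebra.adjoin R ({α, α⁻¹} : Set A) = Algebra.adjoin R {α} :=
  le_antisymm
    (Algebra.adjoin_le <|
      Set.insert_subset (Algebra.self_mem_adjoin_singleton R α) (Set.singleton_subset_iff.mpr h))
    (Algebra.adjoin_mono (Set.singleton_subset_iff.mpr (Set.mem_insert _ _)))

theorem root_is_unit_and_generates_general {K L : Type*} [Field K] [NumberField K]
    [Field L] [Algebra K L] [Algebra (𝓞 K) L] [IsScalarTower (𝓞 K) K L]
    (ω : 𝓞 K) (η : (𝓞 K)ˣ)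
    (hsq : Squarefree (Ideal.span {ω ^ 2 - 4 * (η : 𝓞 K)} : Ideal (𝓞 K)))
    (α : L)
    (hroot : α ^ 2 - algebraMap (𝓞 K) L ω * α + algebraMap (𝓞 K) L (η : 𝓞 K) = 0)
    (hgen : IntermediateField.adjoin K {α} = ⊤)
    (hnotK : α ∉ Set.range (algebraMap K L)) :
    ∃ hmem : α ∈ integralClosure (𝓞 K) L,
      IsUnit (⟨α, hmem⟩ : integralClosure (𝓞 K) L) ∧
      α⁻¹ = algebraMap (𝓞 K) L ((η⁻¹ : (𝓞 K)ˣ) : 𝓞 K) * (algebraMap (𝓞 K) L ω - α) ∧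
      integralClosure (𝓞 K) L = Algebra.adjoin (𝓞 K) {α} ∧
      Algebra.adjoin (𝓞 K) ({α} : Set L) = Algebra.adjoin (𝓞 K) ({α, α⁻¹} : Set L) := by
  have hmul := mul_eq_one_of_sq_sub_mul_add_eq_zero hroot
  have hinv := inv_eq_of_mul_eq_one_right hmul
  have hadj := integralClosure_eq_adjoin_of_squarefree hsq hroot hgen hnotK
  have hinv_mem : α⁻¹ ∈ Algebra.adjoin (𝓞 K) {α} := by
    rw [hinv]
    exact mul_mem (Subalgebra.algebraMap_mem _ _)
      (sub_mem (Subalgebra.algebraMap_mem _ _) (Algebra.self_mem_adjoin_singleton _ α))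
  refine ⟨isIntegral_of_sq_sub_mul_add_eq_zero hroot, ?_, hinv, hadj,
    (Algebra.adjoin_insert_inv_eq_adjoin hinv_mem).symm⟩
  exact IsUnit.of_mul_eq_one ⟨α⁻¹, hadj ▸ hinv_mem⟩
    (Subtype.ext (mul_inv_cancel₀ (left_ne_zero_of_mul_eq_one hmul)))

/-- Let `η` be a unit of `𝓞 K` and `ω ∈ 𝓞 K` with `ω² − 4η` squarefree and coprime to `2`,
and let `α ∉ K` be a root of `X² − ωX + η`, with `L = K(α)`. Then `α` is a unit of the ring
of integers of `L`, `α⁻¹ = η⁻¹(ω − α)`, and `𝓞 L = 𝓞 K[α] = 𝓞 K[α, α⁻¹]`. -/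
theorem root_is_unit_and_generates {K L : Type*} [Field K] [NumberField K]
    [Field L] [NumberField L] [Algebra K L] [Algebra (𝓞 K) L] [IsScalarTower (𝓞 K) K L]
    (ω : 𝓞 K) (η : (𝓞 K)ˣ)
    (hsq : Squarefree (Ideal.span {ω ^ 2 - 4 * (η : 𝓞 K)} : Ideal (𝓞 K)))
    (hcop : (Ideal.span {ω ^ 2 - 4 * (η : 𝓞 K)} : Ideal (𝓞 K)) ⊔
      Ideal.span {(2 : 𝓞 K)} = ⊤)
    (α : L)
    (hroot : α ^ 2 - algebraMap (𝓞 K) L ω * α + algebraMap (𝓞 K) L (η : 𝓞 K) = 0)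
    (hgen : IntermediateField.adjoin K {α} = ⊤)
    (hnotK : α ∉ Set.range (algebraMap K L)) :
    ∃ hmem : α ∈ integralClosure (𝓞 K) L,
      IsUnit (⟨α, hmem⟩ : integralClosure (𝓞 K) L) ∧
      α⁻¹ = algebraMap (𝓞 K) L ((η⁻¹ : (𝓞 K)ˣ) : 𝓞 K) * (algebraMap (𝓞 K) L ω - α) ∧
      integralClosure (𝓞 K) L = Algebra.adjoin (𝓞 K) {α} ∧
      Algebra.adjoin (𝓞 K) ({α} : Set L) = Algebra.adjoin (𝓞 K) ({α, α⁻¹} : Set L) :=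
  root_is_unit_and_generates_general ω η hsq α hroot hgen hnotK
end
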